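/- arXiv:hep-th/9706118 — 2 statements merged into one kernel-verified Lean document; each statement's English description precedes it below -/
import Mathlib

section
/- (Skew symmetry, nonnegative part, without locality) Let A(z) and B(z) be arbitrary fields on M. Then for every integer m and every nonnegative integer n: (B_(m)A)_n = ∑_{i=0}^{n} (−1)^{m+i+1} (∂^{(i)}(A_(m+i)B))_n, i.e., the annihilation parts satisfy (B(z)_(m)A(z))_+ = ∑_{i≥0} (−1)^{m+i+1} ∂^{(i)}(A(z)_(m+i)B(z))_+. -/
/-
Expand both sides into the words `A_{m+n-u} B_u v` and `B_{m+n-u} A_u v`; since `A` and `B` are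
fields only finitely many are nonzero, and it suffices to compare coefficients. For the `B A`
words this is the identity `Δⁿ C(x, j) = C(x, j - n)` for the forward difference in `x`; for the
`A B` words it is `Δⁿ_i C(m + i, u + i - n) = C(m + i, u + i)` (with `C(·, k) = 0` for `k < 0`),
evaluated at `i = 0`. Both follow from Pascal's rule for the generalised binomial coefficient.
-/

open Finset

section VA

variable {k M : Type*} [Field k] [CharZero k] [AddCommGroup M] [Module k M]

/-- Generalized binomial coefficient `C(n,i)` for `n : ℤ`, `i : ℕ`. -/
def ichoose (n : ℤ) (i : ℕ) : ℤ :=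
  if 0 ≤ n then (n.toNat.choose i : ℤ)
  else (-1) ^ i * ((((i : ℤ) - 1 - n).toNat.choose i : ℤ))

/-- `(-1)^m` for an integer `m`. -/
def msign (m : ℤ) : ℤ := if Even m then 1 else -1

/-- A series on `M`, given by its Fourier modes `A_n`. -/
abbrev Ser (M : Type*) : Type _ := ℤ → M → M

/-- `A(z)` is a field: modes applied to any vector vanish for large index. -/
def IsFieldSer (A : Ser M) : Prop := ∀ v : M, ∃ n₀ : ℤ, ∀ n ≥ n₀, A n v = 0

/-- All modes are `k`-linear, i.e. the coefficients are endomorphisms of the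
vector space `M`. -/
def IsLinSer (A : Ser M) : Prop := ∀ n : ℤ, IsLinearMap k (A n)

/-- Residual `m`-th product, in Fourier modes:
`(A_(m)B)_n = ∑_{i≥0} (-1)^i C(m,i) (A_{m-i} B_{n+i} - (-1)^m B_{m+n-i} A_i)`. -/
noncomputable def resProd (A B : Ser M) (m : ℤ) : Ser M := fun n v =>
  ∑ᶠ i : ℕ, ((-1 : ℤ) ^ i * ichoose m i) •
    (A (m - (i : ℤ)) (B (n + (i : ℤ)) v) - msign m • B (m + n - (i : ℤ)) (A (i : ℤ) v))

/-- Mutual locality at order `n`, in Fourier modes: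
`∑_{i=0}^n (-1)^i C(n,i) (A_{p+n-i} B_{q+i} - (-1)^n B_{q+n-i} A_{p+i}) = 0`. -/
def IsLocalAt (A B : Ser M) (n : ℕ) : Prop :=
  ∀ (p q : ℤ) (v : M),
    ∑ i ∈ Finset.range (n + 1), ((-1 : ℤ) ^ i * (n.choose i : ℤ)) •
      (A (p + (n : ℤ) - (i : ℤ)) (B (q + (i : ℤ)) v)
        - (-1 : ℤ) ^ n • B (q + (n : ℤ) - (i : ℤ)) (A (p + (i : ℤ)) v)) = 0

/-- `A` and `B` are mutually local of order exactly `n₀`. -/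
def HasOrder (A B : Ser M) (n₀ : ℕ) : Prop :=
  IsLocalAt A B n₀ ∧ ∀ n : ℕ, IsLocalAt A B n → n₀ ≤ n

/-- The identity field `I(z) = id`. -/
def idSer : Ser M := fun n v => if n = -1 then v else 0

/-- Derivative of a series: `(∂A)_n = -n A_{n-1}`. -/
def dSer (A : Ser M) : Ser M := fun n v => (-n) • A (n - 1) v

/-- Divided-power derivative: `(∂^{(i)}A)_n = (-1)^i C(n,i) A_{n-i}`. -/
def dpowSer (i : ℕ) (A : Ser M) : Ser M := fun n v =>
  ((-1 : ℤ) ^ i * ichoose n i) • A (n - (i : ℤ)) v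

/-- Normally ordered product `:A(z)B(z): = A(z)₋B(z) + B(z)A(z)₊`, in modes. -/
noncomputable def noProd (A B : Ser M) : Ser M := fun n v =>
  (∑ᶠ i : ℕ, A (-(i : ℤ) - 1) (B (n + (i : ℤ)) v)) + ∑ᶠ i : ℕ, B (n - 1 - (i : ℤ)) (A (i : ℤ) v)

lemma ichoose_eq_ringChoose (m : ℤ) (i : ℕ) : ichoose m i = Ring.choose m i := by
  unfold ichoose
  split_ifs with hm
  · rw [← Ring.choose_natCast, Int.toNat_of_nonneg hm]
  · have h : (((i : ℤ) - 1 - m).toNat : ℤ) = -m + i - 1 := by omega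
    rw [← Ring.choose_natCast, h, ← Int.coe_negOnePow_natCast, ← smul_eq_mul, ← Units.smul_def,
      ← Ring.choose_neg, neg_neg]

lemma msign_eq_negOnePow (m : ℤ) : msign m = m.negOnePow := by
  unfold msign
  split_ifs with h
  · rw [Int.negOnePow_even m h]; rfl
  · rw [Int.negOnePow_odd m (Int.not_even_iff_odd.1 h)]; rfl

lemma msign_add_natCast (m : ℤ) (i : ℕ) : msign (m + i) = msign m * (-1) ^ i := by
  rw [msign_eq_negOnePow, msign_eq_negOnePow, Int.negOnePow_add, Units.val_mul,
    Int.coe_negOnePow_natCast]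

lemma msign_succ (m : ℤ) : msign (m + 1) = -msign m := by
  rw [msign_eq_negOnePow, msign_eq_negOnePow, Int.negOnePow_succ, Units.val_neg]

lemma msign_mul_self (m : ℤ) : msign m * msign m = 1 := by
  rw [msign_eq_negOnePow, ← Units.val_mul, ← Int.negOnePow_add, ← two_mul,
    Int.negOnePow_two_mul, Units.val_one]

lemma neg_one_pow_sub_of_le {a b : ℕ} (h : a ≤ b) :
    (-1 : ℤ) ^ (b - a) = (-1) ^ b * (-1) ^ a := by
  obtain ⟨d, rfl⟩ := Nat.exists_eq_add_of_le h
  rw [Nat.add_sub_cancel_left, pow_add, mul_comm, ← mul_assoc, ← pow_add,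
    Even.neg_one_pow ⟨a, rfl⟩, one_mul]

lemma fwdDiff_ringChoose (j : ℕ) :
    fwdDiff 1 (fun x : ℤ ↦ Ring.choose x (j + 1)) = fun x ↦ Ring.choose x j := by
  ext x
  simp only [fwdDiff, Ring.choose_succ_succ, add_sub_cancel_right]

lemma fwdDiff_iter_ringChoose (n j : ℕ) (x : ℤ) :
    (fwdDiff 1)^[n] (fun y : ℤ ↦ Ring.choose y j) x
      = if n ≤ j then Ring.choose x (j - n) else 0 := by
  induction n generalizing j with
  | zero => simp
  | succ n ih =>
    rw [Function.iterate_succ_apply]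
    cases j with
    | zero =>
      simp only [Ring.choose_zero_right, fwdDiff_const]
      simp [Function.iterate_fixed (fwdDiff_const (1 : ℤ) (0 : ℤ))]
    | succ j => simp [fwdDiff_ringChoose, ih]

lemma fwdDiff_ringChoose_diagonal (m : ℤ) (u c : ℕ) :
    fwdDiff 1 (fun i : ℕ ↦ if c + 1 ≤ u + i then Ring.choose (m + i) (u + i - (c + 1)) else 0)
      = fun i ↦ if c ≤ u + i then Ring.choose (m + i) (u + i - c) else 0 := by
  ext i
  simp only [fwdDiff, Nat.cast_add, Nat.cast_one, ← add_assoc]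
  rcases lt_trichotomy c (u + i) with h | rfl | h
  · obtain ⟨k, hk⟩ : ∃ k, u + i = c + 1 + k := ⟨u + i - (c + 1), by omega⟩
    rw [if_pos (by omega), if_pos (by omega), if_pos h.le, hk,
      show c + 1 + k + 1 - (c + 1) = k + 1 by omega, show c + 1 + k - c = k + 1 by omega,
      Nat.add_sub_cancel_left, Ring.choose_succ_succ, add_sub_cancel_left]
  · rw [if_pos (by omega), if_neg (by omega), if_pos le_rfl, Nat.sub_self, Nat.sub_self,
      Ring.choose_zero_right, Ring.choose_zero_right, sub_zero]
  · rw [if_neg (by omega), if_neg (by omega), if_neg (by omega), sub_zero]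

lemma fwdDiff_iter_ringChoose_diagonal (m : ℤ) (u c : ℕ) :
    (fwdDiff 1)^[c] (fun i : ℕ ↦ if c ≤ u + i then Ring.choose (m + i) (u + i - c) else 0)
      = fun i : ℕ ↦ Ring.choose (m + i) (u + i) := by
  induction c with
  | zero => simp
  | succ c ih => rw [Function.iterate_succ_apply, fwdDiff_ringChoose_diagonal, ih]

lemma neg_one_pow_mul_self (n : ℕ) : (-1 : ℤ) ^ n * (-1) ^ n = 1 := by
  rw [← mul_pow]; norm_num

lemma sum_neg_one_pow_mul_choose_mul_ringChoose (m : ℤ) (n j : ℕ) :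
    ∑ i ∈ range (n + 1), (-1) ^ i * n.choose i * Ring.choose (m + i) j
      = if n ≤ j then (-1) ^ n * Ring.choose m (j - n) else 0 := by
  have h := fwdDiff_iter_ringChoose n j m
  rw [fwdDiff_iter_eq_sum_shift] at h
  have hterm : ∀ i ∈ range (n + 1), (-1) ^ i * n.choose i * Ring.choose (m + i) j
      = (-1) ^ n * (((-1 : ℤ) ^ (n - i) * n.choose i) • Ring.choose (m + i • 1) j) := by
    intro i hi
    rw [neg_one_pow_sub_of_le (mem_range_succ_iff.1 hi), smul_eq_mul, nsmul_one]
    linear_combination (-(-1) ^ i * n.choose i * Ring.choose (m + i) j) * neg_one_pow_mul_self n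
  rw [sum_congr rfl hterm, ← mul_sum, h]
  split_ifs <;> simp

lemma sum_ite_neg_one_pow_mul_choose_mul_ringChoose (m : ℤ) (n u : ℕ) :
    ∑ i ∈ range (n + 1), (if n - i ≤ u then
        (-1) ^ (u - (n - i)) * n.choose i * Ring.choose (m + i) (u - (n - i)) else 0)
      = (-1) ^ u * Ring.choose m u := by
  have h := congrFun (fwdDiff_iter_ringChoose_diagonal m u n) 0
  rw [fwdDiff_iter_eq_sum_shift] at h
  simp only [zero_add, smul_eq_mul, mul_one, Nat.cast_zero, add_zero] at h
  rw [← h, mul_sum]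
  refine sum_congr rfl fun i hi ↦ ?_
  have hin := mem_range_succ_iff.1 hi
  by_cases hu : n - i ≤ u
  · rw [if_pos hu, if_pos (by omega), neg_one_pow_sub_of_le hu, neg_one_pow_sub_of_le hin,
      show u - (n - i) = u + i - n by omega]
    ring
  · rw [if_neg hu, if_neg (by omega), mul_zero, mul_zero]

lemma sum_range_add_eq_sum_range_ite {G : Type*} [AddCommMonoid G] (f : ℕ → G) (d K : ℕ)
    (hf : ∀ u, K ≤ u → f u = 0) :
    ∑ j ∈ range K, f (d + j) = ∑ u ∈ range K, if d ≤ u then f u else 0 := by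
  have hfilter : (range K).filter (d ≤ ·) = Ico d K := by
    ext u
    simp only [mem_filter, mem_range, mem_Ico]
    omega
  rw [← sum_filter, hfilter, sum_Ico_eq_sum_range]
  refine (sum_subset (range_subset_range.2 (Nat.sub_le K d)) fun j _ hj ↦ hf _ ?_).symm
  simp only [mem_range, not_lt] at hj
  omega

lemma sum_sum_choose_smul_eq_sum_smul_add {G : Type*} [AddCommGroup G] (Y : ℤ → G) {K : ℕ}
    (hY : ∀ u : ℕ, K ≤ u → Y u = 0) (m : ℤ) (n : ℕ) :
    ∑ i ∈ range (n + 1), ∑ j ∈ range K,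
        ((-1 : ℤ) ^ i * n.choose i * ((-1) ^ j * Ring.choose (m + i) j)) • Y j
      = ∑ j ∈ range K, ((-1 : ℤ) ^ j * Ring.choose m j) • Y (n + j) := by
  have hshift := sum_range_add_eq_sum_range_ite
    (fun u ↦ ((-1 : ℤ) ^ (u - n) * Ring.choose m (u - n)) • Y u) n K
    (fun u hu ↦ by rw [hY u hu, smul_zero])
  simp only [Nat.add_sub_cancel_left, Nat.cast_add] at hshift
  rw [hshift, sum_comm]
  refine sum_congr rfl fun j _ ↦ ?_
  have hcoeff :
      ∑ i ∈ range (n + 1), (-1 : ℤ) ^ i * n.choose i * ((-1) ^ j * Ring.choose (m + i) j)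
      = (-1) ^ j * ∑ i ∈ range (n + 1), (-1) ^ i * n.choose i * Ring.choose (m + i) j := by
    rw [mul_sum]
    exact sum_congr rfl fun i _ ↦ by ring
  rw [← sum_smul, hcoeff, sum_neg_one_pow_mul_choose_mul_ringChoose]
  split_ifs with h
  · rw [neg_one_pow_sub_of_le h, mul_left_comm, mul_assoc, mul_left_comm]
  · rw [mul_zero, zero_smul]

lemma sum_sum_choose_smul_eq_sum_smul {G : Type*} [AddCommGroup G] (X : ℤ → G) {K : ℕ}
    (hX : ∀ u : ℕ, K ≤ u → X u = 0) (m : ℤ) (n : ℕ) :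
    ∑ i ∈ range (n + 1), ∑ j ∈ range K,
        (n.choose i * ((-1 : ℤ) ^ j * Ring.choose (m + i) j)) • X (n - i + j)
      = ∑ u ∈ range K, ((-1 : ℤ) ^ u * Ring.choose m u) • X u := by
  have hinner : ∀ i ∈ range (n + 1), ∑ j ∈ range K,
        (n.choose i * ((-1 : ℤ) ^ j * Ring.choose (m + i) j)) • X (n - i + j)
      = ∑ u ∈ range K, (if n - i ≤ u then
          (-1) ^ (u - (n - i)) * n.choose i * Ring.choose (m + i) (u - (n - i)) else 0) • X u := by
    intro i hi
    have hin := mem_range_succ_iff.1 hi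
    have hshift := sum_range_add_eq_sum_range_ite (fun u ↦
      ((-1 : ℤ) ^ (u - (n - i)) * n.choose i * Ring.choose (m + i) (u - (n - i))) • X u) (n - i) K
      (fun u hu ↦ by rw [hX u hu, smul_zero])
    simp only [Nat.add_sub_cancel_left, Nat.cast_add, Nat.cast_sub hin] at hshift
    simp only [ite_smul, zero_smul, ← hshift]
    exact sum_congr rfl fun j _ ↦ by rw [mul_left_comm, mul_assoc]
  rw [sum_congr rfl hinner, sum_comm]
  refine sum_congr rfl fun u _ ↦ ?_
  rw [← sum_smul, sum_ite_neg_one_pow_mul_choose_mul_ringChoose]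

lemma exists_forall_le_apply_eq_zero {A B : Ser M} (hA : IsFieldSer A) (hB : IsFieldSer B)
    (v : M) : ∃ K : ℕ, (∀ p : ℤ, K ≤ p → A p v = 0) ∧ ∀ p : ℤ, K ≤ p → B p v = 0 := by
  obtain ⟨a, ha⟩ := hA v
  obtain ⟨b, hb⟩ := hB v
  exact ⟨a.toNat + b.toNat, fun p hp ↦ ha p (by omega), fun p hp ↦ hb p (by omega)⟩

section Truncated

variable {A B : Ser M} {v : M} {K : ℕ}

lemma resProd_eq_sum_range (hA0 : ∀ p, A p 0 = 0) (hB0 : ∀ p, B p 0 = 0)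
    (hAv : ∀ p : ℤ, K ≤ p → A p v = 0) (hBv : ∀ p : ℤ, K ≤ p → B p v = 0)
    (m : ℤ) {q : ℤ} (hq : 0 ≤ q) :
    resProd A B m q v = ∑ j ∈ range K, ((-1 : ℤ) ^ j * Ring.choose m j) •
      (A (m - j) (B (q + j) v) - msign m • B (m + q - j) (A j v)) := by
  unfold resProd
  simp only [ichoose_eq_ringChoose]
  refine finsum_eq_sum_of_support_subset _ fun j hj ↦ ?_
  rw [coe_range, Set.mem_Iio]
  by_contra! hKj
  exact hj (by
    dsimp only
    rw [hBv _ (by omega), hAv _ (by omega), hA0, hB0, smul_zero, sub_zero, smul_zero])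

lemma resProd_natCast_eq_sub (hA0 : ∀ p, A p 0 = 0) (hB0 : ∀ p, B p 0 = 0)
    (hAv : ∀ p : ℤ, K ≤ p → A p v = 0) (hBv : ∀ p : ℤ, K ≤ p → B p v = 0)
    (m : ℤ) (n : ℕ) :
    resProd A B m n v
      = ∑ j ∈ range K, ((-1 : ℤ) ^ j * Ring.choose m j) • A (m + n - (n + j)) (B (n + j) v)
        - msign m • ∑ j ∈ range K, ((-1 : ℤ) ^ j * Ring.choose m j) • B (m + n - j) (A j v) := by
  rw [resProd_eq_sum_range hA0 hB0 hAv hBv m (Nat.cast_nonneg n), smul_sum, ← sum_sub_distrib]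
  refine sum_congr rfl fun j _ ↦ ?_
  rw [smul_sub, smul_comm (msign m), show m + n - (n + j : ℤ) = m - j by ring]

lemma msign_smul_dpowSer_resProd_eq_sub (hA0 : ∀ p, A p 0 = 0) (hB0 : ∀ p, B p 0 = 0)
    (hAv : ∀ p : ℤ, K ≤ p → A p v = 0) (hBv : ∀ p : ℤ, K ≤ p → B p v = 0)
    (m : ℤ) {n i : ℕ} (hin : i ≤ n) :
    msign (m + i + 1) • dpowSer i (resProd A B (m + i)) n v
      = ∑ j ∈ range K, ((-1 : ℤ) ^ i * n.choose i * ((-1) ^ j * Ring.choose (m + i) j)) •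
          B (m + n - j) (A j v)
        - msign m • ∑ j ∈ range K, (n.choose i * ((-1 : ℤ) ^ j * Ring.choose (m + i) j)) •
          A (m + n - (n - i + j)) (B (n - i + j) v) := by
  rw [dpowSer, ichoose_eq_ringChoose, Ring.choose_natCast,
    resProd_eq_sum_range hA0 hB0 hAv hBv _ (by omega), msign_succ, msign_add_natCast, smul_sum,
    smul_sum, smul_sum, ← sum_sub_distrib]
  refine sum_congr rfl fun j _ ↦ ?_
  rw [show m + n - (n - i + j : ℤ) = m + i - j by ring,
    show m + i + (n - i) - j = m + n - (j : ℤ) by ring]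
  set P := A (m + i - j) (B (n - i + j) v)
  set Q := B (m + n - j) (A j v)
  set c := (-1 : ℤ) ^ j * Ring.choose (m + i) j
  -- once the signs are expanded, only `msign m ^ 2 = 1` and `((-1) ^ i) ^ 2 = 1` are needed
  linear_combination (norm := module)
    neg_one_pow_mul_self i • (-(msign m * n.choose i * c) • P
      + (msign m * msign m * (-1) ^ i * n.choose i * c) • Q)
    + msign_mul_self m • (((-1) ^ i * n.choose i * c) • Q)

end Truncated

/-- Skew symmetry for the nonnegative modes, without locality: for arbitrary fields
`A, B`, every integer `m` and every nonnegative `n`,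
`(B_(m)A)_n = ∑_{i=0}^n (-1)^{m+i+1} (∂^{(i)}(A_(m+i)B))_n`. -/
theorem stmt16 (A B : Ser M) (hA : IsFieldSer A) (hB : IsFieldSer B)
    (hlA : IsLinSer (k := k) A) (hlB : IsLinSer (k := k) B)
    (m : ℤ) (n : ℕ) (v : M) :
    resProd B A m (n : ℤ) v
      = ∑ i ∈ Finset.range (n + 1),
          msign (m + (i : ℤ) + 1) • dpowSer i (resProd A B (m + i)) (n : ℤ) v := by
  obtain ⟨K, hAv, hBv⟩ := exists_forall_le_apply_eq_zero hA hB v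
  have hA0 : ∀ p, A p 0 = 0 := fun p ↦ (hlA p).map_zero
  have hB0 : ∀ p, B p 0 = 0 := fun p ↦ (hlB p).map_zero
  rw [resProd_natCast_eq_sub hB0 hA0 hBv hAv,
    sum_congr rfl fun i hi ↦ msign_smul_dpowSer_resProd_eq_sub hA0 hB0 hAv hBv m
      (mem_range_succ_iff.1 hi),
    sum_sub_distrib, ← smul_sum,
    sum_sum_choose_smul_eq_sum_smul_add (fun u ↦ B (m + n - u) (A u v))
      (fun u hu ↦ by rw [hAv _ (by omega), hB0]),
    sum_sum_choose_smul_eq_sum_smul (fun u ↦ A (m + n - u) (B u v))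
      (fun u hu ↦ by rw [hBv _ (by omega), hA0])]

end VA
end

section
/- Let B(p,q,r) denote any one of the three terms of the Borcherds identity in a vertex algebra (or for three fixed vectors a,b,c with the products satisfying (B0)). Then the recursion B(p+1,q,r) = B(p,q+1,r) + B(p,q,r+1) holds for each term separately. Consequently, if the Borcherds identity holds for all p,q ∈ ℤ with r = 0 (the commutator formula) and for all q,r ∈ ℤ with p = 0 (the associativity formula), then it holds for all p,q,r ∈ ℤ. -/
lemma ichoose_zero_right (n : ℤ) : ichoose n 0 = 1 := by
  unfold ichoose; split_ifs <;> simp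

lemma ichoose_succ_succ (n : ℤ) (i : ℕ) :
    ichoose (n + 1) (i + 1) = ichoose n (i + 1) + ichoose n i := by
  unfold ichoose
  by_cases hn : 0 ≤ n
  · rw [if_pos hn, if_pos hn, if_pos (by omega), show (n + 1).toNat = n.toNat + 1 by omega,
      Nat.choose_succ_succ]
    push_cast; ring
  rw [if_neg hn, if_neg hn]
  by_cases hn' : 0 ≤ n + 1
  · obtain rfl : n = -1 := by omega
    push_cast
    rw [show ((i : ℤ) + 1 - 1 - -1).toNat = i + 1 by omega,
      show ((i : ℤ) - 1 - -1).toNat = i by omega]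
    simp [pow_succ]
  · push_cast
    rw [if_neg hn', show ((i : ℤ) + 1 - 1 - (n + 1)).toNat = ((i : ℤ) - 1 - n).toNat by omega,
      show ((i : ℤ) + 1 - 1 - n).toNat = ((i : ℤ) - 1 - n).toNat + 1 by omega,
      Nat.choose_succ_succ]
    push_cast; ring

lemma msign_add_one (r : ℤ) : msign (r + 1) = -msign r := by
  unfold msign
  by_cases h : Even r <;> simp [h]

lemma finsum_nat_eq_zero_add {M : Type*} [AddCommMonoid M] {f : ℕ → M}
    (hf : f.HasFiniteSupport) : ∑ᶠ i, f i = f 0 + ∑ᶠ i, f (i + 1) := by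
  obtain ⟨N, hN⟩ := hf.bddAbove
  rw [finsum_eq_sum_of_support_subset f (s := Finset.range (N + 1)) fun i hi => by
      simpa [Nat.lt_succ_iff] using hN hi,
    finsum_eq_sum_of_support_subset (fun i => f (i + 1)) (s := Finset.range N) fun i hi => by
      simpa using hN hi,
    Finset.sum_range_succ', add_comm]

section ShiftSum

variable {V : Type*} [AddCommGroup V]

noncomputable def shiftSum (T : ℤ → ℤ → V) (c : ℕ → ℤ) (u v : ℤ) : V :=
  ∑ᶠ i : ℕ, c i • T (u - i) (v + i)

variable {T : ℤ → ℤ → V}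

lemma hasFiniteSupport_shiftSum_term (hT : ∃ n₀, ∀ m n, n₀ ≤ n → T m n = 0) (c : ℕ → ℤ)
    (u v : ℤ) : (fun i : ℕ => c i • T (u - i) (v + i)).HasFiniteSupport := by
  obtain ⟨n₀, hn₀⟩ := hT
  refine (Set.finite_lt_nat (n₀ - v).toNat).subset fun i hi => ?_
  by_contra hlt
  exact hi (by simp only [hn₀ _ (v + i) (by simp at hlt; omega), smul_zero])

lemma shiftSum_add_one (hT : ∃ n₀, ∀ m n, n₀ ≤ n → T m n = 0) (c : ℕ → ℤ) (u v : ℤ) :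
    shiftSum T c (u + 1) v = c 0 • T (u + 1) v + shiftSum T (fun i => c (i + 1)) u (v + 1) := by
  rw [shiftSum, finsum_nat_eq_zero_add (hasFiniteSupport_shiftSum_term hT c _ v)]
  simp only [Nat.cast_zero, sub_zero, add_zero, Nat.cast_add, Nat.cast_one, shiftSum]
  congr 1
  exact finsum_congr fun i => by rw [add_sub_add_right_eq_sub, add_assoc, add_comm 1]

lemma shiftSum_add_coeff (hT : ∃ n₀, ∀ m n, n₀ ≤ n → T m n = 0) (c d : ℕ → ℤ) (u v : ℤ) :
    shiftSum T (fun i => c i + d i) u v = shiftSum T c u v + shiftSum T d u v := by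
  simp only [shiftSum, add_smul]
  exact finsum_add_distrib (hasFiniteSupport_shiftSum_term hT c u v)
    (hasFiniteSupport_shiftSum_term hT d u v)

lemma shiftSum_neg_coeff (c : ℕ → ℤ) (u v : ℤ) :
    shiftSum T (fun i => -c i) u v = -shiftSum T c u v := by
  simp only [shiftSum, neg_smul, finsum_neg_distrib]

lemma shiftSum_pascal (hT : ∃ n₀, ∀ m n, n₀ ≤ n → T m n = 0) {c c' d : ℕ → ℤ}
    (h₀ : c 0 = c' 0) (hsucc : ∀ i, c (i + 1) = c' (i + 1) + d i) (u v : ℤ) :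
    shiftSum T c (u + 1) v = shiftSum T c' (u + 1) v + shiftSum T d u (v + 1) := by
  rw [shiftSum_add_one hT, shiftSum_add_one hT c', h₀, funext hsucc, shiftSum_add_coeff hT,
    add_assoc]

end ShiftSum

lemma eq_zero_of_pascal_rec {V : Type*} [AddCommGroup V] {F : ℤ → ℤ → ℤ → V}
    (hrec : ∀ p q r, F (p + 1) q r = F p (q + 1) r + F p q (r + 1))
    (hr : ∀ p q, F p q 0 = 0) (hp : ∀ q r, F 0 q r = 0) (p q r : ℤ) : F p q r = 0 := by
  let Q p r := ∀ q, F p q r = 0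
  have up_r p r (h₁ : Q (p + 1) r) (h₂ : Q p r) : Q p (r + 1) := fun q => by
    rw [eq_sub_of_add_eq' (hrec p q r).symm, h₁, h₂, sub_zero]
  have up_p p r (h₁ : Q p r) (h₂ : Q p (r + 1)) : Q (p + 1) r := fun q => by
    rw [hrec, h₁, h₂, add_zero]
  have down p r (h₁ : Q (p - 1) r) (h₂ : Q p (r - 1)) : Q (p - 1) (r - 1) := fun q => by
    have := hrec (p - 1) (q - 1) (r - 1)
    simp only [sub_add_cancel] at this
    rw [eq_sub_of_add_eq this.symm, h₁, h₂, sub_zero]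
  have nonneg_r : ∀ r, 0 ≤ r → ∀ p, Q p r := by
    intro r hr₀
    induction r, hr₀ using Int.leInduction with
    | base => exact hr
    | succ r _ ih => exact fun p => up_r p r (ih (p + 1)) (ih p)
  have nonneg_p : ∀ p, 0 ≤ p → ∀ r, Q p r := by
    intro p hp₀
    induction p, hp₀ using Int.leInduction with
    | base => exact fun r q => hp q r
    | succ p _ ih => exact fun r => up_p p r (ih r) (ih (r + 1))
  have nonpos : ∀ r ≤ 0, ∀ p ≤ 0, Q p r := by
    intro r hr₀
    induction r, hr₀ using Int.leInductionDown with
    | base => exact fun p _ => nonneg_r 0 le_rfl p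
    | pred r _ ih =>
      intro p hp₀
      induction p, hp₀ using Int.leInductionDown with
      | base => exact nonneg_p 0 le_rfl _
      | pred p _ ihp => exact down p r (ih (p - 1) (by omega)) ihp
  rcases le_total 0 r with hr₀ | hr₀
  · exact nonneg_r r hr₀ p q
  rcases le_total 0 p with hp₀ | hp₀
  · exact nonneg_p p hp₀ r q
  · exact nonpos r hr₀ p hp₀ q

section

variable {k V : Type*} [Field k] [CharZero k] [AddCommGroup V] [Module k V]

/-- First term of the Borcherds identity: `∑_{i≥0} C(p,i) (a_(r+i)b)_(p+q-i)c`. -/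
noncomputable def B1 (Y : ℤ → V →ₗ[k] V →ₗ[k] V) (a b c : V) (p q r : ℤ) : V :=
  ∑ᶠ i : ℕ, ichoose p i • Y (p + q - i) (Y (r + i) a b) c

/-- Second term: `∑_{i≥0} (-1)^i C(r,i) a_(p+r-i)(b_(q+i)c)`. -/
noncomputable def B2 (Y : ℤ → V →ₗ[k] V →ₗ[k] V) (a b c : V) (p q r : ℤ) : V :=
  ∑ᶠ i : ℕ, ((-1 : ℤ) ^ i * ichoose r i) • Y (p + r - i) a (Y (q + i) b c)

/-- Third term: `∑_{i≥0} (-1)^{r+i} C(r,i) b_(q+r-i)(a_(p+i)c)`. -/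
noncomputable def B3 (Y : ℤ → V →ₗ[k] V →ₗ[k] V) (a b c : V) (p q r : ℤ) : V :=
  ∑ᶠ i : ℕ, (msign r * (-1 : ℤ) ^ i * ichoose r i) • Y (q + r - i) b (Y (p + i) a c)

end

section

variable {k V : Type*} [Field k] [AddCommGroup V] [Module k V]
variable (Y : ℤ → V →ₗ[k] V →ₗ[k] V) (a b c : V)

lemma B1_eq_shiftSum (p q r : ℤ) :
    B1 Y a b c p q r = shiftSum (fun m n => Y m (Y n a b) c) (ichoose p) (p + q) r :=
  rfl

lemma B2_eq_shiftSum (p q r : ℤ) :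
    B2 Y a b c p q r =
      shiftSum (fun m n => Y m a (Y n b c)) (fun i => (-1) ^ i * ichoose r i) (p + r) q :=
  rfl

lemma B3_eq_shiftSum (p q r : ℤ) :
    B3 Y a b c p q r =
      shiftSum (fun m n => Y m b (Y n a c)) (fun i => msign r * (-1) ^ i * ichoose r i) (q + r) p :=
  rfl

lemma B1_pascal (hab : ∃ n₀ : ℤ, ∀ n ≥ n₀, Y n a b = 0) (p q r : ℤ) :
    B1 Y a b c (p + 1) q r = B1 Y a b c p (q + 1) r + B1 Y a b c p q (r + 1) := by
  obtain ⟨n₀, hn₀⟩ := hab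
  have hT : ∃ n₀, ∀ m n, n₀ ≤ n → Y m (Y n a b) c = 0 := ⟨n₀, fun m n hn => by simp [hn₀ n hn]⟩
  simp only [B1_eq_shiftSum]
  rw [add_right_comm, ← add_assoc]
  exact shiftSum_pascal hT (by simp only [ichoose_zero_right]) (ichoose_succ_succ p) (p + q) r

lemma B2_pascal (hbc : ∃ n₀ : ℤ, ∀ n ≥ n₀, Y n b c = 0) (p q r : ℤ) :
    B2 Y a b c (p + 1) q r = B2 Y a b c p (q + 1) r + B2 Y a b c p q (r + 1) := by
  obtain ⟨n₀, hn₀⟩ := hbc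
  have hT : ∃ n₀, ∀ m n, n₀ ≤ n → Y m a (Y n b c) = 0 := ⟨n₀, fun m n hn => by simp [hn₀ n hn]⟩
  simp only [B2_eq_shiftSum]
  rw [add_right_comm, ← add_assoc, add_comm (shiftSum _ _ _ (q + 1))]
  exact shiftSum_pascal hT (by simp only [pow_zero, ichoose_zero_right])
    (fun i => by rw [ichoose_succ_succ, pow_succ]; ring) (p + r) q

lemma B3_pascal (hac : ∃ n₀ : ℤ, ∀ n ≥ n₀, Y n a c = 0) (p q r : ℤ) :
    B3 Y a b c (p + 1) q r = B3 Y a b c p (q + 1) r + B3 Y a b c p q (r + 1) := by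
  obtain ⟨n₀, hn₀⟩ := hac
  have hT : ∃ n₀, ∀ m n, n₀ ≤ n → Y m b (Y n a c) = 0 := ⟨n₀, fun m n hn => by simp [hn₀ n hn]⟩
  simp only [B3_eq_shiftSum]
  have h := shiftSum_pascal hT (c := fun i => msign (r + 1) * (-1) ^ i * ichoose (r + 1) i)
    (c' := fun i => -(msign r * (-1) ^ i * ichoose r i))
    (d := fun i => msign r * (-1) ^ i * ichoose r i)
    (by simp only [msign_add_one, pow_zero, ichoose_zero_right, mul_one])
    (fun i => by rw [msign_add_one, ichoose_succ_succ, pow_succ]; ring) (q + r) p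
  rw [shiftSum_neg_coeff] at h
  rw [add_right_comm q 1 r, ← add_assoc q r 1, h]
  abel

end

section

variable {k V : Type*} [Field k] [CharZero k] [AddCommGroup V] [Module k V]

/-- Each of the three terms of the Borcherds identity satisfies the recursion
`B(p+1,q,r) = B(p,q+1,r) + B(p,q,r+1)`; consequently, the Borcherds identity for
`r = 0` (commutator formula) and for `p = 0` (associativity formula) implies the
Borcherds identity for all `p, q, r`. -/
theorem stmt19 (Y : ℤ → V →ₗ[k] V →ₗ[k] V)
    (htrunc : ∀ a b : V, ∃ n₀ : ℤ, ∀ n ≥ n₀, Y n a b = 0) (a b c : V) :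
    ((∀ p q r : ℤ, B1 Y a b c (p + 1) q r = B1 Y a b c p (q + 1) r + B1 Y a b c p q (r + 1)) ∧
     (∀ p q r : ℤ, B2 Y a b c (p + 1) q r = B2 Y a b c p (q + 1) r + B2 Y a b c p q (r + 1)) ∧
     (∀ p q r : ℤ, B3 Y a b c (p + 1) q r = B3 Y a b c p (q + 1) r + B3 Y a b c p q (r + 1))) ∧
    ((∀ p q : ℤ, B1 Y a b c p q 0 = B2 Y a b c p q 0 - B3 Y a b c p q 0) →
     (∀ q r : ℤ, B1 Y a b c 0 q r = B2 Y a b c 0 q r - B3 Y a b c 0 q r) →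
     ∀ p q r : ℤ, B1 Y a b c p q r = B2 Y a b c p q r - B3 Y a b c p q r) := by
  have h₁ := B1_pascal Y a b c (htrunc a b)
  have h₂ := B2_pascal Y a b c (htrunc b c)
  have h₃ := B3_pascal Y a b c (htrunc a c)
  refine ⟨⟨h₁, h₂, h₃⟩, fun hcomm hassoc p q r => sub_eq_zero.1 ?_⟩
  refine eq_zero_of_pascal_rec
    (F := fun p q r => B1 Y a b c p q r - (B2 Y a b c p q r - B3 Y a b c p q r))
    (fun p q r => ?_) (fun p q => sub_eq_zero.2 (hcomm p q))
    (fun q r => sub_eq_zero.2 (hassoc q r)) p q r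
  simp only [h₁, h₂, h₃]
  abel

end
end
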